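/- Action model execution preserves bisimilarity: if (M,s) and (M',s') are bisimilar pointed Kripke models and (𝙼, 𝐬) is a pointed action model (whose preconditions are formulas of the modal language, so that satisfaction is bisimulation-invariant), then (M,s) ⊗ (𝙼,𝐬) and (M',s') ⊗ (𝙼,𝐬) are bisimilar. -/

import Mathlib

structure Kripke (Agent Atom W : Type) where
  R : Agent → W → W → Prop
  V : Atom → W → Prop

inductive Form (Agent Atom : Type) : Type where
  | atom : Atom → Form Agent Atom
  | top  : Form Agent Atom
  | neg  : Form Agent Atom → Form Agent Atom
  | and  : Form Agent Atom → Form Agent Atom → Form Agent Atom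
  | box  : Agent → Form Agent Atom → Form Agent Atom

def Sat {Agent Atom W : Type} (M : Kripke Agent Atom W) : W → Form Agent Atom → Prop
  | _, .top => True
  | s, .atom r => M.V r s
  | s, .neg φ => ¬ Sat M s φ
  | s, .and φ ψ => Sat M s φ ∧ Sat M s ψ
  | s, .box C φ => ∀ t, M.R C s t → Sat M t φ

structure IsBisim {Agent Atom W W' : Type} (M : Kripke Agent Atom W)
    (M' : Kripke Agent Atom W') (Z : W → W' → Prop) : Prop where
  atoms : ∀ ⦃s s'⦄, Z s s' → ∀ r, M.V r s ↔ M'.V r s'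
  forth : ∀ ⦃s s'⦄, Z s s' → ∀ C t, M.R C s t → ∃ t', M'.R C s' t' ∧ Z t t'
  back  : ∀ ⦃s s'⦄, Z s s' → ∀ C t', M'.R C s' t' → ∃ t, M.R C s t ∧ Z t t'

structure ActionModel (Agent Atom E : Type) where
  R : Agent → E → E → Prop
  pre : E → Form Agent Atom

def prodUpdate {Agent Atom W E : Type} (M : Kripke Agent Atom W)
    (A : ActionModel Agent Atom E) :
    Kripke Agent Atom {p : W × E // Sat M p.1 (A.pre p.2)} where
  R C p q := M.R C p.1.1 q.1.1 ∧ A.R C p.1.2 q.1.2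
  V r p := M.V r p.1.1

structure PModel (Agent Atom : Type) where
  W : Type
  M : Kripke Agent Atom W
  s : W

def PSat {Agent Atom : Type} (P : PModel Agent Atom) (φ : Form Agent Atom) : Prop :=
  Sat P.M P.s φ

def PBisim {Agent Atom : Type} (P Q : PModel Agent Atom) : Prop :=
  ∃ Z : P.W → Q.W → Prop, IsBisim P.M Q.M Z ∧ Z P.s Q.s

open Classical in
noncomputable def pUpdate {Agent Atom E : Type} (P : PModel Agent Atom)
    (A : ActionModel Agent Atom E) (a : E) : PModel Agent Atom :=
  if h : Sat P.M P.s (A.pre a) then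
    ⟨_, prodUpdate P.M A, ⟨(P.s, a), h⟩⟩
  else P

/-! Bisimilar states satisfy the same modal formulas, so a bisimilar pair of states passes the
precondition of an action point either both or neither. Pairing bisimilar states with the same
action point is therefore a bisimulation between the product updates: a transition of one product
is a transition of the Kripke model, matched across the bisimulation, together with the same action
transition, and the matched target again satisfies the precondition. -/

theorem sat_iff_of_isBisim {Agent Atom W W' : Type} {M : Kripke Agent Atom W}
    {M' : Kripke Agent Atom W'} {Z : W → W' → Prop} (hZ : IsBisim M M' Z)
    (φ : Form Agent Atom) : ∀ {s s'}, Z s s' → (Sat M s φ ↔ Sat M' s' φ) := by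
  induction φ with
  | atom r => exact fun h => hZ.atoms h r
  | top => exact fun _ => Iff.rfl
  | neg φ ih => exact fun h => not_congr (ih h)
  | and φ ψ ihφ ihψ => exact fun h => and_congr (ihφ h) (ihψ h)
  | box C φ ih =>
    intro s s' h
    constructor
    · intro hs t' ht'
      obtain ⟨t, ht, hZt⟩ := hZ.back h C t' ht'
      exact (ih hZt).mp (hs t ht)
    · intro hs' t ht
      obtain ⟨t', ht', hZt⟩ := hZ.forth h C t ht
      exact (ih hZt).mpr (hs' t' ht')

theorem PBisim.psat_iff {Agent Atom : Type} {P Q : PModel Agent Atom} (h : PBisim P Q)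
    (φ : Form Agent Atom) : PSat P φ ↔ PSat Q φ :=
  let ⟨_, hZ, hs⟩ := h
  sat_iff_of_isBisim hZ φ hs

theorem IsBisim.prodUpdate {Agent Atom W W' E : Type} {M : Kripke Agent Atom W}
    {M' : Kripke Agent Atom W'} {Z : W → W' → Prop} (hZ : IsBisim M M' Z)
    (A : ActionModel Agent Atom E) :
    IsBisim (prodUpdate M A) (prodUpdate M' A) (fun p q => Z p.1.1 q.1.1 ∧ p.1.2 = q.1.2) where
  atoms := fun _ _ ⟨hZpq, _⟩ r => hZ.atoms hZpq r
  forth := by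
    rintro p q ⟨hZpq, hpq⟩ C ⟨⟨t, e⟩, hpre⟩ ⟨hMt, hAe⟩
    obtain ⟨t', hMt', hZt⟩ := hZ.forth hZpq C t hMt
    exact ⟨⟨(t', e), (sat_iff_of_isBisim hZ _ hZt).mp hpre⟩, ⟨hMt', hpq ▸ hAe⟩, hZt, rfl⟩
  back := by
    rintro p q ⟨hZpq, hpq⟩ C ⟨⟨t', e⟩, hpre'⟩ ⟨hMt', hAe⟩
    obtain ⟨t, hMt, hZt⟩ := hZ.back hZpq C t' hMt'
    exact ⟨⟨(t, e), (sat_iff_of_isBisim hZ _ hZt).mpr hpre'⟩, ⟨hMt, hpq ▸ hAe⟩, hZt, rfl⟩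

theorem update_preserves_bisimilarity {Agent Atom E : Type} (P Q : PModel Agent Atom)
    (A : ActionModel Agent Atom E) (a : E) (h : PBisim P Q) :
    PBisim (pUpdate P A a) (pUpdate Q A a) := by
  have hpre : Sat P.M P.s (A.pre a) ↔ Sat Q.M Q.s (A.pre a) := h.psat_iff (A.pre a)
  obtain ⟨Z, hZ, hs⟩ := h
  by_cases hP : Sat P.M P.s (A.pre a)
  · have hQ : Sat Q.M Q.s (A.pre a) := hpre.mp hP
    rw [pUpdate, dif_pos hP, pUpdate, dif_pos hQ]
    exact ⟨_, hZ.prodUpdate A, hs, rfl⟩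
  · have hQ : ¬ Sat Q.M Q.s (A.pre a) := mt hpre.mpr hP
    rw [pUpdate, dif_neg hP, pUpdate, dif_neg hQ]
    exact ⟨Z, hZ, hs⟩
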